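/- Let X and G be independent Exp(1) random variables and let γ denote the Euler–Mascheroni constant. Then lim_{P → ∞} E[max(0, log(1 + X·P) − E[log(1 + G·P)])] = E[max(0, log X + γ)], and this limit is strictly positive. -/

import Mathlib

/-!
For `x, P > 0`, `log (1 + x P) = log P + log (P⁻¹ + x)`, and the constant `log P` cancels against
the mean, so the quantity at `P` is `E[(log (ε + X) - E log (ε + X))⁺]` with `ε = P⁻¹ → 0⁺`.
Since `|log (ε + x)| ≤ |log x| + log 2` for `0 ≤ ε ≤ 1` and `log X` is integrable, dominated
convergence (first for the mean, then for the positive part) gives the limit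
`E[(log X - E log X)⁺]`, and `E log X = Γ'(1) = -γ`. The limit is positive because
`log X + γ > 0` on the event `X > 1`, which has probability `e⁻¹`.
-/

open MeasureTheory ProbabilityTheory Filter Real Set
open scoped Topology

section MeanPositiveExcess

variable {α : Type*} [MeasurableSpace α] {ν : Measure α}

noncomputable def meanPositiveExcess (ν : Measure α) (f : α → ℝ) : ℝ :=
  ∫ x, max 0 (f x - ∫ y, f y ∂ν) ∂ν

lemma meanPositiveExcess_congr_ae {f g : α → ℝ} (h : f =ᵐ[ν] g) :
    meanPositiveExcess ν f = meanPositiveExcess ν g := by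
  unfold meanPositiveExcess
  rw [integral_congr_ae h]
  refine integral_congr_ae ?_
  filter_upwards [h] with x hx
  rw [hx]

lemma meanPositiveExcess_add_const [IsProbabilityMeasure ν] {f : α → ℝ} (hf : Integrable f ν)
    (c : ℝ) : meanPositiveExcess ν (fun x => f x + c) = meanPositiveExcess ν f := by
  simp only [meanPositiveExcess, integral_add hf (integrable_const c), integral_const,
    probReal_univ, one_smul, add_sub_add_right_eq_sub]

lemma meanPositiveExcess_pos [IsFiniteMeasure ν] {f : α → ℝ} (hf : Integrable f ν)
    (h : 0 < ν {x | ∫ y, f y ∂ν < f x}) : 0 < meanPositiveExcess ν f := by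
  have hint : Integrable (fun x => max 0 (f x - ∫ y, f y ∂ν)) ν :=
    (integrable_const 0).sup (hf.sub (integrable_const _))
  refine (integral_pos_iff_support_of_nonneg (fun x => le_max_left _ _) hint).mpr ?_
  convert h using 2
  ext x
  simp

lemma tendsto_meanPositiveExcess [IsFiniteMeasure ν] {ι : Type*} {l : Filter ι}
    [l.IsCountablyGenerated] {F : ι → α → ℝ} {f g : α → ℝ}
    (hF : ∀ᶠ i in l, AEStronglyMeasurable (F i) ν) (hg : Integrable g ν)
    (hbound : ∀ᶠ i in l, ∀ᵐ x ∂ν, ‖F i x‖ ≤ g x)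
    (hlim : ∀ᵐ x ∂ν, Tendsto (fun i => F i x) l (𝓝 (f x))) :
    Tendsto (fun i => meanPositiveExcess ν (F i)) l (𝓝 (meanPositiveExcess ν f)) := by
  have hmean : Tendsto (fun i => ∫ x, F i x ∂ν) l (𝓝 (∫ x, f x ∂ν)) :=
    tendsto_integral_filter_of_dominated_convergence g hF hbound hg hlim
  refine tendsto_integral_filter_of_dominated_convergence (fun x => g x + ∫ y, g y ∂ν) ?_ ?_
    (hg.add (integrable_const _)) ?_
  · filter_upwards [hF] with i hi using
      aestronglyMeasurable_const.sup (hi.sub aestronglyMeasurable_const)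
  · filter_upwards [hbound] with i hi
    have hmean_le : ‖∫ x, F i x ∂ν‖ ≤ ∫ x, g x ∂ν := norm_integral_le_of_norm_le hg hi
    filter_upwards [hi] with x hx
    rw [Real.norm_eq_abs] at hx hmean_le ⊢
    rw [abs_of_nonneg (le_max_left _ _)]
    exact max_le (by linarith [abs_nonneg (F i x), abs_nonneg (∫ x, F i x ∂ν)])
      (by linarith [le_abs_self (F i x), neg_abs_le (∫ x, F i x ∂ν)])
  · filter_upwards [hlim] with x hx using tendsto_const_nhds.max (hx.sub hmean)

end MeanPositiveExcess

lemma abs_log_add_le {x ε : ℝ} (hx : 0 < x) (hε : 0 ≤ ε) (hε1 : ε ≤ 1) :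
    |log (ε + x)| ≤ |log x| + log 2 := by
  have hlog2 : 0 ≤ log 2 := log_nonneg one_le_two
  rcases le_or_gt (ε + x) 1 with hsmall | hbig
  · rw [abs_of_nonpos (log_nonpos (by positivity) hsmall)]
    linarith [log_le_log hx (by linarith : x ≤ ε + x), neg_abs_le (log x)]
  rw [abs_of_pos (log_pos hbig)]
  rcases le_or_gt x 1 with hx1 | hx1
  · linarith [log_le_log (by positivity) (by linarith : ε + x ≤ 2), abs_nonneg (log x)]
  · have h2x : log (2 * x) = log 2 + log x := log_mul two_ne_zero hx.ne'
    linarith [log_le_log (by positivity) (by linarith : ε + x ≤ 2 * x), le_abs_self (log x)]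

lemma log_one_add_mul_eq {x P : ℝ} (hx : 0 < x) (hP : 0 < P) :
    log (1 + x * P) = log (P⁻¹ + x) + log P := by
  rw [← log_mul (by positivity) hP.ne']
  congr 1
  field_simp

lemma ae_norm_log_add_le {ν : Measure ℝ} (hpos : ∀ᵐ x ∂ν, 0 < x) {ε : ℝ} (hε : 0 ≤ ε)
    (hε1 : ε ≤ 1) :
    ∀ᵐ x ∂ν, ‖log (ε + x)‖ ≤ |log x| + log 2 := by
  filter_upwards [hpos] with x hx using abs_log_add_le hx hε hε1

theorem tendsto_meanPositiveExcess_log_one_add_mul {ν : Measure ℝ} [IsProbabilityMeasure ν]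
    (hpos : ∀ᵐ x ∂ν, 0 < x) (hlog : Integrable log ν) :
    Tendsto (fun P => meanPositiveExcess ν fun x => log (1 + x * P)) atTop
      (𝓝 (meanPositiveExcess ν log)) := by
  have hdom : Integrable (fun x => |log x| + log 2) ν := hlog.abs.add (integrable_const _)
  have hshift : ∀ᶠ P in atTop, meanPositiveExcess ν (fun x => log (P⁻¹ + x)) =
      meanPositiveExcess ν fun x => log (1 + x * P) := by
    filter_upwards [eventually_ge_atTop 1] with P hP
    have hP0 : 0 < P := by linarith
    have hint : Integrable (fun x => log (P⁻¹ + x)) ν :=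
      hdom.mono' (measurable_log.comp (measurable_const_add _)).aestronglyMeasurable
        (ae_norm_log_add_le hpos (by positivity) (inv_le_one_of_one_le₀ hP))
    rw [← meanPositiveExcess_add_const hint (log P)]
    refine meanPositiveExcess_congr_ae ?_
    filter_upwards [hpos] with x hx using (log_one_add_mul_eq hx hP0).symm
  have hsmall : Tendsto (fun ε => meanPositiveExcess ν fun x => log (ε + x)) (𝓝[>] 0)
      (𝓝 (meanPositiveExcess ν log)) := by
    refine tendsto_meanPositiveExcess (.of_forall fun ε =>
      (measurable_log.comp (measurable_const_add ε)).aestronglyMeasurable) hdom ?_ ?_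
    · filter_upwards [Ioc_mem_nhdsGT one_pos] with ε hε using
        ae_norm_log_add_le hpos hε.1.le hε.2
    · filter_upwards [hpos] with x hx
      have h : Tendsto (fun ε : ℝ => ε + x) (𝓝[>] 0) (𝓝 (0 + x)) :=
        (tendsto_nhdsWithin_of_tendsto_nhds tendsto_id).add_const x
      exact (zero_add x ▸ h).log hx.ne'
  exact (hsmall.comp tendsto_inv_atTop_nhdsGT_zero).congr' hshift

lemma measurable_exponentialPDF (r : ℝ) : Measurable (exponentialPDF r) :=
  (measurable_exponentialPDFReal r).ennreal_ofReal

lemma exponentialPDFReal_mul_eq_indicator (r : ℝ) (g : ℝ → ℝ) :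
    (fun x => exponentialPDFReal r x * g x) =
      (Ici 0).indicator fun x => r * exp (-(r * x)) * g x := by
  ext x
  by_cases hx : 0 ≤ x <;> simp [exponentialPDFReal, gammaPDFReal, hx]

lemma integral_expMeasure {r : ℝ} (hr : 0 < r) (g : ℝ → ℝ) :
    ∫ x, g x ∂expMeasure r = ∫ x in Ioi 0, r * exp (-(r * x)) * g x := by
  change ∫ x, g x ∂volume.withDensity (exponentialPDF r) = _
  rw [integral_withDensity_eq_integral_toReal_smul (measurable_exponentialPDF r)
    (ae_of_all _ fun _ => ENNReal.ofReal_lt_top)]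
  simp_rw [exponentialPDF, ENNReal.toReal_ofReal (exponentialPDFReal_nonneg hr _), smul_eq_mul,
    exponentialPDFReal_mul_eq_indicator, integral_indicator measurableSet_Ici,
    integral_Ici_eq_integral_Ioi]

lemma integrable_expMeasure_iff {r : ℝ} (hr : 0 < r) {g : ℝ → ℝ} :
    Integrable g (expMeasure r) ↔ IntegrableOn (fun x => r * exp (-(r * x)) * g x) (Ioi 0) := by
  change Integrable g (volume.withDensity (exponentialPDF r)) ↔ _
  rw [integrable_withDensity_iff_integrable_smul' (measurable_exponentialPDF r)
    (ae_of_all _ fun _ => ENNReal.ofReal_lt_top)]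
  simp_rw [exponentialPDF, ENNReal.toReal_ofReal (exponentialPDFReal_nonneg hr _), smul_eq_mul,
    exponentialPDFReal_mul_eq_indicator, integrable_indicator_iff measurableSet_Ici]
  exact integrableOn_Ici_iff_integrableOn_Ioi

lemma ae_pos_expMeasure (r : ℝ) : ∀ᵐ x ∂expMeasure r, 0 < x := by
  change ∀ᵐ x ∂volume.withDensity (exponentialPDF r), 0 < x
  rw [ae_withDensity_iff (measurable_exponentialPDF r)]
  filter_upwards [Measure.ae_ne volume 0] with x hx0 hpdf
  exact lt_of_le_of_ne (not_lt.mp fun hneg => hpdf (exponentialPDF_of_neg hneg)) hx0.symm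

lemma expMeasure_Ioi_pos {r : ℝ} (hr : 0 < r) (x : ℝ) : 0 < expMeasure r (Ioi x) := by
  have := isProbabilityMeasure_expMeasure hr
  refine pos_iff_ne_zero.mpr fun h => ?_
  have hIic : expMeasure r (Iic x) = 1 := by
    rwa [← prob_compl_eq_zero_iff measurableSet_Iic, compl_Iic]
  have hcdf : cdf (expMeasure r) x = 1 := by
    rw [cdf_eq_real, measureReal_def, hIic, ENNReal.toReal_one]
  rw [cdf_expMeasure_eq hr] at hcdf
  split_ifs at hcdf
  · linarith [exp_pos (-(r * x))]
  · exact zero_ne_one hcdf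

lemma abs_log_le_two_mul_rpow_add {x : ℝ} (hx : 0 < x) :
    |log x| ≤ 2 * x ^ (-(1 / 2) : ℝ) + x := by
  have hupper : log x ≤ x := by simpa using log_le_rpow_div hx.le one_pos
  have hlower : -log x ≤ 2 * x ^ (-(1 / 2) : ℝ) := by
    have := log_le_rpow_div (inv_pos.mpr hx).le (by norm_num : (0 : ℝ) < 1 / 2)
    rwa [log_inv, inv_rpow hx.le, ← rpow_neg hx.le, div_eq_mul_inv, mul_comm, inv_div,
      div_one] at this
  have : 0 ≤ x ^ (-(1 / 2) : ℝ) := by positivity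
  rw [abs_le]
  constructor <;> linarith

lemma integrable_log_expMeasure_one : Integrable log (expMeasure 1) := by
  rw [integrable_expMeasure_iff one_pos]
  have hdom : IntegrableOn
      (fun x => 2 * (exp (-x) * x ^ ((1 / 2 : ℝ) - 1)) + exp (-x) * x ^ ((2 : ℝ) - 1)) (Ioi 0) :=
    ((GammaIntegral_convergent (by norm_num)).const_mul 2).add (GammaIntegral_convergent two_pos)
  refine hdom.mono' (by fun_prop) ?_
  filter_upwards [ae_restrict_mem measurableSet_Ioi] with x hx
  have hlog := abs_log_le_two_mul_rpow_add (mem_Ioi.mp hx)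
  have hexp := exp_pos (-x)
  norm_num [abs_of_pos hexp] at hlog ⊢
  nlinarith

lemma integral_log_mul_exp_neg :
    ∫ x in Ioi 0, log x * exp (-x) = -eulerMascheroniConstant := by
  have hΓ : Complex.GammaIntegral =ᶠ[𝓝 1] Complex.Gamma := by
    filter_upwards [(isOpen_lt continuous_const Complex.continuous_re).mem_nhds
      (by simp : (0 : ℝ) < (1 : ℂ).re)] with s hs using (Complex.Gamma_eq_integral hs).symm
  have hderiv := (Complex.hasDerivAt_GammaIntegral (s := 1) (by simp)).unique
    (Complex.hasDerivAt_Gamma_one.congr_of_eventuallyEq hΓ)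
  have hreal : (∫ t : ℝ in Ioi 0, (t : ℂ) ^ ((1 : ℂ) - 1) * ((log t : ℂ) * (exp (-t) : ℂ))) =
      ((∫ t in Ioi 0, log t * exp (-t) : ℝ) : ℂ) := by
    rw [← integral_complex_ofReal]
    simp
  exact_mod_cast hreal ▸ hderiv

lemma integral_log_expMeasure_one : ∫ x, log x ∂expMeasure 1 = -eulerMascheroniConstant := by
  rw [integral_expMeasure one_pos, ← integral_log_mul_exp_neg]
  simp_rw [one_mul, mul_comm]

lemma meanPositiveExcess_log_expMeasure_one_pos : 0 < meanPositiveExcess (expMeasure 1) log := by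
  have := isProbabilityMeasure_expMeasure one_pos
  refine meanPositiveExcess_pos integrable_log_expMeasure_one
    ((expMeasure_Ioi_pos one_pos 1).trans_le (measure_mono fun x hx => ?_))
  rw [mem_ofPred_eq, integral_log_expMeasure_one]
  linarith [log_pos (mem_Ioi.mp hx), one_half_lt_eulerMascheroniConstant]

section HasLaw

variable {Ω 𝓧 : Type*} [MeasurableSpace Ω] [MeasurableSpace 𝓧] {P : Measure Ω} {ν : Measure 𝓧}

-- `Measure.map` sends a non-a.e.-measurable function to `0`, so a nonzero law forces measurability.
lemma hasLaw_of_map_eq [NeZero ν] {X : Ω → 𝓧} (h : P.map X = ν) : HasLaw X ν P :=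
  ⟨.of_map_ne_zero (h ▸ NeZero.ne ν), h⟩

lemma integral_max_zero_sub_integral_of_hasLaw {X G : Ω → 𝓧} (hX : HasLaw X ν P)
    (hG : HasLaw G ν P) {f : 𝓧 → ℝ} (hf : Measurable f) :
    ∫ ω, max 0 (f (X ω) - ∫ ω', f (G ω') ∂P) ∂P = meanPositiveExcess ν f := by
  have hmean : ∫ ω', f (G ω') ∂P = ∫ x, f x ∂ν := hG.integral_comp hf.aestronglyMeasurable
  rw [hmean]
  exact hX.integral_comp (f := fun x => max 0 (f x - ∫ y, f y ∂ν))
    (measurable_const.max (hf.sub_const _)).aestronglyMeasurable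

end HasLaw

theorem stmt18_general {Ω : Type*} [MeasurableSpace Ω] (μ : Measure Ω)
    (X G : Ω → ℝ)
    (hXd : Measure.map X μ = expMeasure 1)
    (hGd : Measure.map G μ = expMeasure 1) :
    Tendsto (fun P : ℝ => ∫ ω,
        max 0 (Real.log (1 + X ω * P) - ∫ ω', Real.log (1 + G ω' * P) ∂μ) ∂μ)
      atTop
      (nhds (∫ ω, max 0 (Real.log (X ω) + Real.eulerMascheroniConstant) ∂μ)) ∧
    0 < ∫ ω, max 0 (Real.log (X ω) + Real.eulerMascheroniConstant) ∂μ := by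
  have := isProbabilityMeasure_expMeasure one_pos
  have hX := hasLaw_of_map_eq hXd
  have hG := hasLaw_of_map_eq hGd
  have hrate (P : ℝ) : ∫ ω, max 0 (log (1 + X ω * P) - ∫ ω', log (1 + G ω' * P) ∂μ) ∂μ =
      meanPositiveExcess (expMeasure 1) fun x => log (1 + x * P) :=
    integral_max_zero_sub_integral_of_hasLaw hX hG
      (measurable_log.comp ((measurable_id.mul_const P).const_add 1))
  have hlimit : ∫ ω, max 0 (log (X ω) + eulerMascheroniConstant) ∂μ =
      meanPositiveExcess (expMeasure 1) log := by
    simp_rw [meanPositiveExcess, integral_log_expMeasure_one, sub_neg_eq_add]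
    exact hX.integral_comp (f := fun x => max 0 (log x + eulerMascheroniConstant))
      (by measurability)
  simp only [hrate, hlimit]
  exact ⟨tendsto_meanPositiveExcess_log_one_add_mul (ae_pos_expMeasure 1)
    integrable_log_expMeasure_one, meanPositiveExcess_log_expMeasure_one_pos⟩

/-- Let `X` and `G` be independent `Exp(1)` random variables and let `γ` be
the Euler–Mascheroni constant.  Then
`lim_{P → ∞} E[max(0, log(1 + X·P) − E[log(1 + G·P)])] = E[max(0, log X + γ)]`,
and this limit is strictly positive. -/
theorem stmt18 {Ω : Type*} [MeasurableSpace Ω] (μ : Measure Ω)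
    [IsProbabilityMeasure μ]
    (X G : Ω → ℝ) (hXm : Measurable X) (hGm : Measurable G)
    (hIndep : IndepFun X G μ)
    (hXd : Measure.map X μ = expMeasure 1)
    (hGd : Measure.map G μ = expMeasure 1) :
    Tendsto (fun P : ℝ => ∫ ω,
        max 0 (Real.log (1 + X ω * P) - ∫ ω', Real.log (1 + G ω' * P) ∂μ) ∂μ)
      atTop
      (nhds (∫ ω, max 0 (Real.log (X ω) + Real.eulerMascheroniConstant) ∂μ)) ∧
    0 < ∫ ω, max 0 (Real.log (X ω) + Real.eulerMascheroniConstant) ∂μ :=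
  stmt18_general μ X G hXd hGd
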